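/- (Venter-type theorem) Let (x_n) be a nonnegative real sequence with x_{n+1} ≤ (1 − α_n)x_n + ω_n for all n ≥ 0, where α_n ∈ (0,1], ω_n ≥ 0, Σ_{n} ω_n < ∞, Σ_n α_n = ∞. Then x_n → 0. -/

import Mathlib

/-!
The quantity `y n = x n + ∑_{k ≥ n} ω k` satisfies `y (n + 1) + α n * x n ≤ y n`. Hence `y` is
antitone and bounded below, so it converges, and `∑ α n * x n` is finite by telescoping. As the
tails of `∑ ω` vanish, `x` converges to the same limit `L ≥ 0`; and `L > 0` would make `∑ α n`
finite.
-/

open Filter Topology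

section Telescoping

variable {y a : ℕ → ℝ}

lemma sum_range_le_sub_of_succ_add_le (h : ∀ n, y (n + 1) + a n ≤ y n) (m : ℕ) :
    ∑ k ∈ Finset.range m, a k ≤ y 0 - y m := by
  induction m with
  | zero => simp
  | succ m ih =>
    rw [Finset.sum_range_succ]
    linarith [h m]

lemma summable_of_succ_add_le (ha : ∀ n, 0 ≤ a n) (h : ∀ n, y (n + 1) + a n ≤ y n)
    (hy : BddBelow (Set.range y)) : Summable a := by
  obtain ⟨b, hb⟩ := hy
  refine summable_of_sum_range_le (c := y 0 - b) ha fun m => ?_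
  linarith [sum_range_le_sub_of_succ_add_le h m, hb (Set.mem_range_self m)]

lemma exists_tendsto_of_succ_add_le (ha : ∀ n, 0 ≤ a n) (h : ∀ n, y (n + 1) + a n ≤ y n)
    (hy : BddBelow (Set.range y)) : ∃ L, Tendsto y atTop (𝓝 L) :=
  ⟨_, tendsto_atTop_ciInf (antitone_nat_of_succ_le fun n => by linarith [h n, ha n]) hy⟩

end Telescoping

lemma nonpos_of_tendsto_of_summable_mul {x α : ℕ → ℝ} {L : ℝ} (hα : ∀ n, 0 ≤ α n)
    (hαsum : ¬ Summable α) (hx : Tendsto x atTop (𝓝 L))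
    (hsum : Summable fun n => α n * x n) : L ≤ 0 := by
  by_contra! hL
  refine hαsum ((hsum.mul_left (2 / L)).of_norm_bounded_eventually_nat ?_)
  filter_upwards [hx.eventually (lt_mem_nhds (half_lt_self hL))] with n hn
  have hxn : 1 ≤ 2 / L * x n := by
    rw [div_mul_eq_mul_div, le_div_iff₀ hL]
    linarith
  calc ‖α n‖ = α n * 1 := by rw [Real.norm_of_nonneg (hα n), mul_one]
    _ ≤ α n * (2 / L * x n) := mul_le_mul_of_nonneg_left hxn (hα n)
    _ = 2 / L * (α n * x n) := by ring

lemma tsum_nat_add_eq_add_tsum_nat_add_succ {ω : ℕ → ℝ} (hω : Summable ω) (n : ℕ) :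
    ∑' k, ω (k + n) = ω n + ∑' k, ω (k + (n + 1)) := by
  rw [((summable_nat_add_iff n).2 hω).tsum_eq_zero_add]
  simp only [zero_add, add_right_comm _ 1 n, add_assoc]

theorem stmt6_general (x α ω : ℕ → ℝ)
    (hx : ∀ n, 0 ≤ x n)
    (hα : ∀ n, α n ∈ Set.Ioc (0 : ℝ) 1)
    (hωsum : Summable ω)
    (hαsum : ¬ Summable α)
    (hrec : ∀ n, x (n + 1) ≤ (1 - α n) * x n + ω n) :
    Tendsto x atTop (𝓝 0) := by
  set y := fun n => x n + ∑' k, ω (k + n)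
  have hαx : ∀ n, 0 ≤ α n * x n := fun n => mul_nonneg (hα n).1.le (hx n)
  have hstep : ∀ n, y (n + 1) + α n * x n ≤ y n := fun n => by
    simp only [y, tsum_nat_add_eq_add_tsum_nat_add_succ hωsum n]
    linarith [hrec n]
  have htail : Tendsto (fun n => ∑' k, ω (k + n)) atTop (𝓝 0) := tendsto_sum_nat_add ω
  have hy : BddBelow (Set.range y) := by
    obtain ⟨b, hb⟩ := htail.bddBelow_range
    exact ⟨b, by rintro _ ⟨n, rfl⟩; linarith [hx n, hb (Set.mem_range_self n)]⟩
  obtain ⟨L, hyL⟩ := exists_tendsto_of_succ_add_le hαx hstep hy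
  have hxL : Tendsto x atTop (𝓝 L) := by simpa [y] using hyL.sub htail
  have hL : L = 0 := le_antisymm
    (nonpos_of_tendsto_of_summable_mul (fun n => (hα n).1.le) hαsum hxL
      (summable_of_succ_add_le hαx hstep hy))
    (ge_of_tendsto' hxL hx)
  rwa [hL] at hxL

theorem stmt6 (x α ω : ℕ → ℝ)
    (hx : ∀ n, 0 ≤ x n)
    (hα : ∀ n, α n ∈ Set.Ioc (0 : ℝ) 1)
    (hω : ∀ n, 0 ≤ ω n)
    (hωsum : Summable ω)
    (hαsum : ¬ Summable α)
    (hrec : ∀ n, x (n + 1) ≤ (1 - α n) * x n + ω n) :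
    Tendsto x atTop (𝓝 0) :=
  stmt6_general x α ω hx hα hωsum hαsum hrec
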